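/- Let 𝒴 be a finite linearly ordered set and let Q, Q' : 𝒴 → (0,1] be strictly positive probability mass functions on 𝒴. Let γ ∈ (0,1) and η ∈ (−1,∞), let (w_k)_{k≥1} be the truncated negative binomial distribution D_{η,γ} with probability generating function φ, and define A(y) = φ(Q(≤y)) − φ(Q(<y)) and A'(y) = φ(Q'(≤y)) − φ(Q'(<y)). Let ε₀ ≥ 0 and suppose ∑_y max(Q(y) − e^{ε₀} Q'(y), 0) = 0 and ∑_y max(Q'(y) − e^{ε₀} Q(y), 0) = 0 (i.e., the base mechanism is ε₀-differentially private on this pair). Then ∑_{y∈𝒴} max(A(y) − e^{(η+2)ε₀}·A'(y), 0) = 0, i.e., the selection algorithm is (η+2)·ε₀-differentially private on this pair. -/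

import Mathlib

open Finset Real

/-- Cumulative mass `Q(≤ y)` of a pmf on a finite linearly ordered set. -/
noncomputable def cumLE {Y : Type*} [Fintype Y] [LinearOrder Y] (Q : Y → ℝ) (y : Y) : ℝ :=
  ∑ z ∈ Finset.univ.filter (fun z => z ≤ y), Q z

/-- Cumulative mass `Q(< y)` of a pmf on a finite linearly ordered set. -/
noncomputable def cumLT {Y : Type*} [Fintype Y] [LinearOrder Y] (Q : Y → ℝ) (y : Y) : ℝ :=
  ∑ z ∈ Finset.univ.filter (fun z => z < y), Q z

/-- The pmf of the truncated negative binomial distribution `D_{η,γ}` (supported on `k ≥ 1`). -/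
noncomputable def negBinPMF (η γ : ℝ) (k : ℕ) : ℝ :=
  if k = 0 then 0
  else if η = 0 then (1 - γ) ^ k / (k * Real.log (1 / γ))
  else (1 - γ) ^ k / (γ ^ (-η) - 1) * ∏ i ∈ Finset.range k, ((i + η) / (i + 1))

/-- The mean of the truncated negative binomial distribution `D_{η,γ}`. -/
noncomputable def negBinMean (η γ : ℝ) : ℝ :=
  if η = 0 then (1 / γ - 1) / Real.log (1 / γ)
  else η * (1 - γ) / (γ * (1 - γ ^ η))

/-- The probability generating function of a distribution `w` on ℕ. -/
noncomputable def pgf (w : ℕ → ℝ) (z : ℝ) : ℝ := ∑' k : ℕ, w k * z ^ k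

/-!
By the binomial series (the logarithmic series when `η = 0`), `pgf (negBinPMF η γ)` is, up to the
positive factor `(∫ t in γ..1, t ^ (-(η + 1)))⁻¹`, an antiderivative of
`x ↦ (1 - γ) * (1 - (1 - γ) * x) ^ (-(η + 1))`. Hence `A y` is the integral of `t ^ (-(η + 1))`
over `[1 - (1 - γ) Q(≤ y), 1 - (1 - γ) Q(< y)]`. Pure `ε₀`-DP of the base mechanism makes this
interval at most `e ^ ε₀` times as long as the one for `Q'`, with a left end point at least
`e ^ (-ε₀)` times the one for `Q'`. An affine change of variables then bounds the integral by
`e ^ ε₀` (for the length) times `e ^ ((η + 1) ε₀)` (from the homogeneity of `t ^ (-(η + 1))`)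
times the integral for `Q'`.
-/

open intervalIntegral

lemma prod_range_div_eq_choose (η : ℝ) (k : ℕ) :
    ∏ i ∈ range k, ((i + η) / (i + 1)) = Ring.choose (η + k - 1) k := by
  rw [Ring.choose_eq_smul, Polynomial.descPochhammer_smeval_eq_ascPochhammer,
    Polynomial.ascPochhammer_smeval_eq_eval, show η + k - 1 - k + 1 = η by ring, smul_eq_mul]
  induction k with
  | zero => simp
  | succ k ih =>
    rw [prod_range_succ, ih, ascPochhammer_succ_eval, Nat.factorial_succ]
    push_cast
    field_simp
    ring

lemma hasSum_choose_mul_pow {η z : ℝ} (hz : |z| < 1) :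
    HasSum (fun k : ℕ => Ring.choose (η + k - 1) k * z ^ k) ((1 - z) ^ (-η)) := by
  have h := (one_div_one_sub_rpow_hasFPowerSeriesOnBall_zero η).hasSum
    (y := z) (by simpa [enorm_eq_nnnorm, ← NNReal.coe_lt_coe] using hz)
  simp only [FormalMultilinearSeries.ofScalars_apply_eq, smul_eq_mul, zero_add] at h
  rwa [one_div, ← rpow_neg (by linarith [le_abs_self z])] at h

lemma hasSum_negBinPMF_mul_pow {η γ x : ℝ} (hη : η ≠ 0) (hx : |(1 - γ) * x| < 1) :
    HasSum (fun k => negBinPMF η γ k * x ^ k)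
      (((1 - (1 - γ) * x) ^ (-η) - 1) / (γ ^ (-η) - 1)) := by
  refine (((hasSum_choose_mul_pow hx).sub (hasSum_ite_eq 0 1)).div_const _).congr_fun fun k => ?_
  rcases eq_or_ne k 0 with rfl | hk
  · simp [negBinPMF]
  · rw [negBinPMF, if_neg hk, if_neg hη, if_neg hk, prod_range_div_eq_choose, mul_pow]
    ring

lemma hasSum_negBinPMF_zero_mul_pow {γ x : ℝ} (hx : |(1 - γ) * x| < 1) :
    HasSum (fun k => negBinPMF 0 γ k * x ^ k) (-log (1 - (1 - γ) * x) / log (1 / γ)) := by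
  refine (hasSum_nat_add_iff' 1).1 ?_
  rw [sum_range_one, show negBinPMF 0 γ 0 = 0 from if_pos rfl, zero_mul, sub_zero]
  refine ((hasSum_pow_div_log_of_abs_lt_one hx).div_const _).congr_fun fun k => ?_
  rw [negBinPMF, if_neg k.succ_ne_zero, if_pos rfl, mul_pow]
  push_cast
  field_simp

lemma pgf_negBinPMF_sub_eq_div_integral {η γ p q : ℝ} (hγ : 0 < γ) (hp : |(1 - γ) * p| < 1)
    (hq : |(1 - γ) * q| < 1) :
    pgf (negBinPMF η γ) q - pgf (negBinPMF η γ) p =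
      (∫ t in (1 - (1 - γ) * q)..(1 - (1 - γ) * p), t ^ (-(η + 1))) /
        ∫ t in γ..1, t ^ (-(η + 1)) := by
  have hu : 0 < 1 - (1 - γ) * q := by linarith [le_abs_self ((1 - γ) * q)]
  have hv : 0 < 1 - (1 - γ) * p := by linarith [le_abs_self ((1 - γ) * p)]
  rcases eq_or_ne η 0 with rfl | hη
  · rw [pgf, pgf, (hasSum_negBinPMF_zero_mul_pow hq).tsum_eq,
      (hasSum_negBinPMF_zero_mul_pow hp).tsum_eq]
    simp only [zero_add, rpow_neg_one]
    rw [integral_inv_of_pos hu hv, integral_inv_of_pos hγ one_pos, log_div hv.ne' hu.ne']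
    ring
  · have hexp : -(η + 1) ≠ -1 := by contrapose! hη; linarith
    rw [pgf, pgf, (hasSum_negBinPMF_mul_pow hη hq).tsum_eq,
      (hasSum_negBinPMF_mul_pow hη hp).tsum_eq,
      integral_rpow (Or.inr ⟨hexp, Set.notMem_uIcc_of_lt hu hv⟩),
      integral_rpow (Or.inr ⟨hexp, Set.notMem_uIcc_of_lt hγ one_pos⟩),
      show -(η + 1) + 1 = -η by ring, one_rpow, div_div_div_cancel_right₀ (by simpa using hη),
      show (1:ℝ) - γ ^ (-η) = -(γ ^ (-η) - 1) by ring, div_neg]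
    ring

lemma rpow_neg_le_rpow_mul_rpow_neg {β r s t : ℝ} (hβ : 0 ≤ β) (hr : 0 < r) (hs : 0 < s)
    (hst : s / r ≤ t) : t ^ (-β) ≤ r ^ β * s ^ (-β) := by
  calc t ^ (-β) ≤ (s / r) ^ (-β) := rpow_le_rpow_of_nonpos (by positivity) hst (by linarith)
    _ = r ^ β * s ^ (-β) := by
      rw [div_rpow hs.le hr.le, rpow_neg hr.le, div_inv_eq_mul, mul_comm]

lemma integral_rpow_neg_le_rpow_mul {β r u v u' v' : ℝ} (hβ : 0 ≤ β) (hr : 1 ≤ r) (hu' : 0 < u')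
    (huv : u ≤ v) (hstart : u' ≤ r * u) (hlen : v - u ≤ r * (v' - u')) :
    ∫ t in u..v, t ^ (-β) ≤ r ^ (β + 1) * ∫ s in u'..v', s ^ (-β) := by
  have hr0 : 0 < r := by linarith
  set w := u' + (v - u) / r
  have huw : u' ≤ w := le_add_of_nonneg_right (div_nonneg (sub_nonneg.2 huv) hr0.le)
  have hu'w : 0 ≤ -β ∨ 0 ∉ Set.uIcc u' w := Or.inr (Set.notMem_uIcc_of_lt hu' (by linarith))
  have hwv : w ≤ v' := by
    have : (v - u) / r ≤ v' - u' := by rw [div_le_iff₀ hr0]; linarith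
    linarith
  -- `t = r * s + (u - r * u')` maps `[u', w]` onto `[u, v]`, and `t ≥ s / r` there
  have hdom : ∀ s ∈ Set.Icc u' w, s / r ≤ r * s + (u - r * u') := fun s hs => by
    rw [div_le_iff₀ hr0]
    nlinarith [mul_nonneg (mul_nonneg (sub_nonneg.2 hr) (by linarith : 0 ≤ r + 1))
      (sub_nonneg.2 hs.1)]
  calc ∫ t in u..v, t ^ (-β)
      = r * ∫ s in u'..w, (r * s + (u - r * u')) ^ (-β) := by
        rw [integral_comp_mul_add (fun t => t ^ (-β)) hr0.ne', smul_eq_mul,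
          mul_inv_cancel_left₀ hr0.ne']
        congr 1
        · ring
        · simp only [w]; field_simp; ring
    _ ≤ r * ∫ s in u'..w, r ^ β * s ^ (-β) := by
        gcongr
        refine integral_mono_on huw ?_ ?_ fun s hs =>
          rpow_neg_le_rpow_mul_rpow_neg hβ hr0 (by linarith [hs.1]) (hdom s hs)
        · refine ContinuousOn.intervalIntegrable (ContinuousOn.rpow_const (by fun_prop) ?_)
          intro s hs
          rw [Set.uIcc_of_le huw] at hs
          exact Or.inl (ne_of_gt (lt_of_lt_of_le (div_pos (by linarith [hs.1]) hr0) (hdom s hs)))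
        · exact (intervalIntegrable_rpow hu'w).const_mul _
    _ = r ^ (β + 1) * ∫ s in u'..w, s ^ (-β) := by
        rw [integral_const_mul, rpow_add_one hr0.ne']; ring
    _ ≤ r ^ (β + 1) * ∫ s in u'..v', s ^ (-β) := by
        gcongr
        refine integral_mono_interval le_rfl huw hwv ?_
          (intervalIntegrable_rpow (Or.inr (Set.notMem_uIcc_of_lt hu' (by linarith))))
        filter_upwards [MeasureTheory.ae_restrict_mem measurableSet_Ioc] with s hs
        exact rpow_nonneg (by linarith [hs.1]) _

lemma pgf_negBinPMF_sub_le_rpow_mul {η γ r p q p' q' : ℝ} (hη : -1 ≤ η) (hγ₀ : 0 < γ)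
    (hγ₁ : γ ≤ 1) (hr : 1 ≤ r) (hp : 0 ≤ p) (hpq : p ≤ q) (hq : q ≤ 1) (hp' : 0 ≤ p')
    (hq' : q' ≤ 1) (hmass : q - p ≤ r * (q' - p')) (htail : 1 - q' ≤ r * (1 - q)) :
    pgf (negBinPMF η γ) q - pgf (negBinPMF η γ) p ≤
      r ^ (η + 2) * (pgf (negBinPMF η γ) q' - pgf (negBinPMF η γ) p') := by
  have hpq' : p' ≤ q' := by nlinarith
  have habs : ∀ x, 0 ≤ x → x ≤ 1 → |(1 - γ) * x| < 1 := fun x hx₀ hx₁ => by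
    rw [abs_of_nonneg (mul_nonneg (by linarith) hx₀)]
    nlinarith
  rw [pgf_negBinPMF_sub_eq_div_integral hγ₀ (habs p hp (hpq.trans hq))
      (habs q (hp.trans hpq) hq),
    pgf_negBinPMF_sub_eq_div_integral hγ₀ (habs p' hp' (hpq'.trans hq'))
      (habs q' (hp'.trans hpq') hq'), ← mul_div_assoc, show η + 2 = η + 1 + 1 by ring]
  refine div_le_div_of_nonneg_right (integral_rpow_neg_le_rpow_mul (by linarith) hr
    (by nlinarith) (by nlinarith) ?_ ?_)
    (integral_nonneg hγ₁ fun t ht => rpow_nonneg (by linarith [ht.1]) _)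
  · nlinarith [mul_le_mul_of_nonneg_left htail (sub_nonneg.2 hγ₁)]
  · nlinarith [mul_le_mul_of_nonneg_left hmass (sub_nonneg.2 hγ₁)]

lemma sum_max_sub_eq_zero_iff {ι : Type*} [Fintype ι] {f g : ι → ℝ} :
    ∑ i, max (f i - g i) 0 = 0 ↔ ∀ i, f i ≤ g i := by
  simp [sum_eq_zero_iff_of_nonneg fun i _ => le_max_right (f i - g i) 0]

section Cumulative

variable {Y : Type*} [Fintype Y] [LinearOrder Y]

lemma cumLE_eq_cumLT_add (Q : Y → ℝ) (y : Y) : cumLE Q y = cumLT Q y + Q y := by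
  have : univ.filter (· ≤ y) = insert y (univ.filter (· < y)) := by
    ext z
    simp [le_iff_lt_or_eq, or_comm]
  rw [cumLE, cumLT, this, sum_insert (by simp), add_comm]

variable {Q Q' : Y → ℝ}

lemma cumLT_nonneg (hQ : ∀ y, 0 ≤ Q y) (y : Y) : 0 ≤ cumLT Q y :=
  sum_nonneg fun z _ => hQ z

lemma cumLE_le_sum (hQ : ∀ y, 0 ≤ Q y) (y : Y) : cumLE Q y ≤ ∑ z, Q z :=
  sum_le_sum_of_subset_of_nonneg (filter_subset _ _) fun z _ _ => hQ z

lemma sum_sub_cumLE_le_mul {r : ℝ} (h : ∀ z, Q' z ≤ r * Q z) (y : Y) :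
    ∑ z, Q' z - cumLE Q' y ≤ r * (∑ z, Q z - cumLE Q y) := by
  rw [cumLE, cumLE, ← sum_filter_add_sum_filter_not univ (· ≤ y) Q,
    ← sum_filter_add_sum_filter_not univ (· ≤ y) Q', add_sub_cancel_left, add_sub_cancel_left,
    mul_sum]
  exact sum_le_sum fun z _ => h z

end Cumulative

theorem private_selection_negbin_pure_dp_general
    {Y : Type*} [Fintype Y] [LinearOrder Y]
    (Q Q' : Y → ℝ)
    (hQ_pos : ∀ y, 0 < Q y) (hQ_sum : ∑ y, Q y = 1)
    (hQ'_pos : ∀ y, 0 < Q' y) (hQ'_sum : ∑ y, Q' y = 1)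
    (γ η : ℝ) (hγ : γ ∈ Set.Ioo (0 : ℝ) 1) (hη : -1 < η)
    (A A' : Y → ℝ)
    (hA : ∀ y, A y = pgf (negBinPMF η γ) (cumLE Q y) - pgf (negBinPMF η γ) (cumLT Q y))
    (hA' : ∀ y, A' y = pgf (negBinPMF η γ) (cumLE Q' y) - pgf (negBinPMF η γ) (cumLT Q' y))
    (ε₀ : ℝ) (hε₀ : 0 ≤ ε₀)
    (hQDP : ∑ y, max (Q y - Real.exp ε₀ * Q' y) 0 = 0)
    (hQDP' : ∑ y, max (Q' y - Real.exp ε₀ * Q y) 0 = 0) :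
    ∑ y, max (A y - Real.exp ((η + 2) * ε₀) * A' y) 0 = 0 := by
  obtain ⟨hγ₀, hγ₁⟩ := hγ
  have hQ₀ : ∀ y, 0 ≤ Q y := fun y => (hQ_pos y).le
  have hQ'₀ : ∀ y, 0 ≤ Q' y := fun y => (hQ'_pos y).le
  have hQQ' := sum_max_sub_eq_zero_iff.1 hQDP
  have hQ'Q := sum_max_sub_eq_zero_iff.1 hQDP'
  refine sum_max_sub_eq_zero_iff.2 fun y => ?_
  have hmass : cumLE Q y - cumLT Q y ≤ exp ε₀ * (cumLE Q' y - cumLT Q' y) := by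
    simpa only [cumLE_eq_cumLT_add, add_sub_cancel_left] using hQQ' y
  have htail := sum_sub_cumLE_le_mul hQ'Q y
  rw [hQ_sum, hQ'_sum] at htail
  rw [hA, hA', mul_comm (η + 2), exp_mul]
  exact pgf_negBinPMF_sub_le_rpow_mul hη.le hγ₀ hγ₁.le (one_le_exp hε₀) (cumLT_nonneg hQ₀ y)
    (by linarith [cumLE_eq_cumLT_add Q y, hQ₀ y]) (hQ_sum ▸ cumLE_le_sum hQ₀ y)
    (cumLT_nonneg hQ'₀ y) (hQ'_sum ▸ cumLE_le_sum hQ'₀ y) hmass htail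

/-- Corollary 5.3: pure DP guarantee for private selection with a truncated
negative binomial number of candidates. -/
theorem private_selection_negbin_pure_dp
    {Y : Type*} [Fintype Y] [LinearOrder Y]
    (Q Q' : Y → ℝ)
    (hQ_pos : ∀ y, 0 < Q y) (hQ_le : ∀ y, Q y ≤ 1) (hQ_sum : ∑ y, Q y = 1)
    (hQ'_pos : ∀ y, 0 < Q' y) (hQ'_le : ∀ y, Q' y ≤ 1) (hQ'_sum : ∑ y, Q' y = 1)
    (γ η : ℝ) (hγ : γ ∈ Set.Ioo (0 : ℝ) 1) (hη : -1 < η)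
    (A A' : Y → ℝ)
    (hA : ∀ y, A y = pgf (negBinPMF η γ) (cumLE Q y) - pgf (negBinPMF η γ) (cumLT Q y))
    (hA' : ∀ y, A' y = pgf (negBinPMF η γ) (cumLE Q' y) - pgf (negBinPMF η γ) (cumLT Q' y))
    (ε₀ : ℝ) (hε₀ : 0 ≤ ε₀)
    (hQDP : ∑ y, max (Q y - Real.exp ε₀ * Q' y) 0 = 0)
    (hQDP' : ∑ y, max (Q' y - Real.exp ε₀ * Q y) 0 = 0) :
    ∑ y, max (A y - Real.exp ((η + 2) * ε₀) * A' y) 0 = 0 :=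
  private_selection_negbin_pure_dp_general Q Q' hQ_pos hQ_sum hQ'_pos hQ'_sum γ η hγ hη A A' hA hA'
    ε₀ hε₀ hQDP hQDP'
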